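/- arXiv:2001.00006 — 7 statements merged into one kernel-verified Lean document; each statement's English description precedes it below -/
import Mathlib

section
/- Let P = {x ∈ ℝ^n : A x = b and x ≥ 0} be a standard-form polyhedron. If x is an extreme point of P (x ∈ Set.extremePoints ℝ P), then x is a basic feasible solution: x ∈ P and the family of columns {A_j : x_j ≠ 0} of A (viewed as vectors in ℝ^m indexed by the set of coordinates j with x_j ≠ 0) is linearly independent over ℝ. -/
/-!
A dependence among the columns of `A` on the support of `x` is a nonzero `d` with `A d = 0`
vanishing off the support of `x`. Since `x` is positive on its support, `x + t d ∈ P` for all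
small `|t|`, so `x` is the midpoint of two distinct points of `P`.
-/

open Filter Topology Matrix

theorem eq_zero_of_mem_extremePoints_of_eventually_add_smul_mem {E : Type*} [AddCommGroup E]
    [Module ℝ E] {s : Set E} {x d : E} (hx : x ∈ s.extremePoints ℝ)
    (h : ∀ᶠ t in 𝓝 (0 : ℝ), x + t • d ∈ s) : d = 0 := by
  obtain ⟨ε, hε, hball⟩ := Metric.eventually_nhds_iff.1 h
  have hmem : ∀ t, |t| < ε → x + t • d ∈ s := fun t ht => hball (by simpa using ht)
  have hε₂ : 0 < ε / 2 := half_pos hε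
  have hε₂' : |ε / 2| < ε := by rw [abs_of_pos hε₂]; linarith
  have hseg : x ∈ openSegment ℝ (x + (ε / 2) • d) (x + (-(ε / 2)) • d) :=
    ⟨1 / 2, 1 / 2, by norm_num, by norm_num, by norm_num, by module⟩
  have hfix : x + (ε / 2) • d = x :=
    hx.2 (hmem _ hε₂') (hmem _ (by rwa [abs_neg])) hseg
  exact (smul_eq_zero.1 (add_eq_left.1 hfix)).resolve_left hε₂.ne'

theorem eventually_nonneg_add_smul {ι : Type*} [Finite ι] {x d : ι → ℝ} (hx : 0 ≤ x)
    (hd : ∀ j, x j = 0 → d j = 0) : ∀ᶠ t in 𝓝 (0 : ℝ), 0 ≤ x + t • d := by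
  simp only [Pi.le_def, eventually_all]
  intro j
  rcases (hx j).eq_or_lt with hj | hj
  · simp [← hj, hd j hj.symm]
  · have hlim : Tendsto (fun t : ℝ => x j + t * d j) (𝓝 0) (𝓝 (x j)) :=
      (by fun_prop : Continuous fun t : ℝ => x j + t * d j).tendsto' 0 (x j) (by simp)
    filter_upwards [hlim.eventually_const_lt hj] with t ht
    simpa using ht.le

theorem Matrix.linearIndependent_subtype_cols_of_forall_mulVec_eq_zero {R m n : Type*}
    [CommRing R] [Fintype n] (A : Matrix m n R) (p : n → Prop)
    (h : ∀ d : n → R, (∀ j, ¬ p j → d j = 0) → A *ᵥ d = 0 → d = 0) :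
    LinearIndependent R (fun j : {j // p j} => fun i => A i j) := by
  classical
  rw [Fintype.linearIndependent_iff]
  intro g hg j
  have hext := h (fun k => if hk : p k then g ⟨k, hk⟩ else 0) (fun k hk => dif_neg hk) ?_
  · simpa [j.2] using congrFun hext j
  · ext i
    have hgi := congrFun hg i
    simp only [Finset.sum_apply, Pi.smul_apply, smul_eq_mul] at hgi
    have hp (k : {k // p k}) : p k := k.2
    have hnp (k : {k // ¬ p k}) : ¬ p k := k.2
    simpa [mulVec, dotProduct, ← Fintype.sum_subtype_add_sum_subtype p, hp, hnp, mul_comm] using hgi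

/-- If `x` is an extreme point of the standard-form polyhedron
`P = {x | A x = b ∧ x ≥ 0}`, then `x` is a basic feasible solution:
`x ∈ P` and the columns of `A` indexed by `{j | x j ≠ 0}` are linearly
independent over `ℝ`. -/
theorem extremePoint_is_basicFeasible (m n : ℕ) (A : Matrix (Fin m) (Fin n) ℝ)
    (b : Fin m → ℝ) (P : Set (Fin n → ℝ))
    (hP : P = {x : Fin n → ℝ | A.mulVec x = b ∧ ∀ j, 0 ≤ x j})
    (x : Fin n → ℝ) (hx : x ∈ Set.extremePoints ℝ P) :
    x ∈ P ∧
      LinearIndependent ℝ (fun j : {j : Fin n // x j ≠ 0} =>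
        (fun i : Fin m => A i (j : Fin n))) := by
  subst hP
  obtain ⟨hAx, hx₀⟩ := hx.1
  refine ⟨hx.1, A.linearIndependent_subtype_cols_of_forall_mulVec_eq_zero _ ?_⟩
  intro d hd hAd
  refine eq_zero_of_mem_extremePoints_of_eventually_add_smul_mem hx ?_
  filter_upwards [eventually_nonneg_add_smul hx₀ fun j hj => hd j (not_not.2 hj)] with t ht
  exact ⟨by simp [mulVec_add, mulVec_smul, hAd, hAx], ht⟩
end

section
/- Let P = {x ∈ ℝ^n : A x = b and x ≥ 0} be a standard-form polyhedron. If x is a basic feasible solution of P (i.e., x ∈ P and the columns {A_j : x_j ≠ 0} of A are linearly independent over ℝ), then x is a vertex of P: there exists c ∈ ℝ^n such that c·y < c·x for every y ∈ P with y ≠ x. -/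
/-- If `x` is a basic feasible solution of the standard-form polyhedron
`P = {x | A x = b ∧ x ≥ 0}` (i.e. `x ∈ P` and the columns of `A` indexed by
`{j | x j ≠ 0}` are linearly independent), then `x` is a vertex of `P`:
there is a linear objective `c` of which `x` is the unique maximizer over `P`. -/
theorem basicFeasible_is_vertex (m n : ℕ) (A : Matrix (Fin m) (Fin n) ℝ)
    (b : Fin m → ℝ) (P : Set (Fin n → ℝ))
    (hP : P = {x : Fin n → ℝ | A.mulVec x = b ∧ ∀ j, 0 ≤ x j})
    (x : Fin n → ℝ) (hx : x ∈ P)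
    (hind : LinearIndependent ℝ (fun j : {j : Fin n // x j ≠ 0} =>
      (fun i : Fin m => A i (j : Fin n)))) :
    ∃ c : Fin n → ℝ, ∀ y ∈ P, y ≠ x →
      dotProduct c y < dotProduct c x := by
  subst hP
  obtain ⟨hAx, hx0⟩ := hx
  set c : Fin n → ℝ := fun j => if x j = 0 then -1 else 0 with hc
  refine ⟨c, ?_⟩
  rintro y ⟨hAy, hy0⟩ hyx
  have hcx : dotProduct c x = 0 := by
    apply Finset.sum_eq_zero
    intro j _
    by_cases h : x j = 0 <;> simp [hc, h]
  rw [hcx]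
  have hle : ∀ j ∈ Finset.univ, c j * y j ≤ (0 : ℝ) := by
    intro j _
    by_cases h : x j = 0
    · simp [hc, h, hy0 j]
    · simp [hc, h]
  by_cases hsupp : ∀ j, x j = 0 → y j = 0
  · -- then y = x by linear independence, contradiction
    exfalso
    apply hyx
    have hg : ∀ j : {j : Fin n // x j ≠ 0},
        (fun j : {j : Fin n // x j ≠ 0} => y (j : Fin n) - x (j : Fin n)) j = 0 := by
      rw [Fintype.linearIndependent_iff] at hind
      apply hind
      funext i
      have hsum :
          (∑ j : {j : Fin n // x j ≠ 0},
            (y (j : Fin n) - x (j : Fin n)) • (fun i : Fin m => A i (j : Fin n))) i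
          = ∑ j : {j : Fin n // x j ≠ 0}, (y (j : Fin n) - x (j : Fin n)) * A i (j : Fin n) := by
        rw [Finset.sum_apply]
        simp
      rw [hsum]
      have h1 : ∑ j : {j : Fin n // x j ≠ 0}, (y (j : Fin n) - x (j : Fin n)) * A i (j : Fin n)
          = ∑ j ∈ Finset.univ.filter (fun j => x j ≠ 0), (y j - x j) * A i j := by
        exact (Finset.sum_subtype (Finset.univ.filter (fun j => x j ≠ 0))
          (by simp) (fun j => (y j - x j) * A i j)).symm
      rw [h1]
      have h2 : ∑ j ∈ Finset.univ.filter (fun j => x j ≠ 0), (y j - x j) * A i j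
          = ∑ j : Fin n, (y j - x j) * A i j := by
        apply Finset.sum_subset (Finset.filter_subset _ _)
        intro j _ hj
        simp only [Finset.mem_filter, Finset.mem_univ, true_and, not_not] at hj
        rw [hsupp j hj, hj]
        ring
      rw [h2]
      have h3 : ∑ j : Fin n, (y j - x j) * A i j
          = A.mulVec y i - A.mulVec x i := by
        simp only [Matrix.mulVec, dotProduct, ← Finset.sum_sub_distrib]
        exact Finset.sum_congr rfl fun j _ => by ring
      rw [h3, hAy, hAx]
      simp
    funext j
    by_cases h : x j = 0
    · rw [hsupp j h, h]
    · have := hg ⟨j, h⟩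
      simpa using sub_eq_zero.mp this
  · push_neg at hsupp
    obtain ⟨j0, hj0, hyj0⟩ := hsupp
    have hpos : 0 < y j0 := lt_of_le_of_ne (hy0 j0) (Ne.symm hyj0)
    have : dotProduct c y < ∑ _j : Fin n, (0 : ℝ) := by
      apply Finset.sum_lt_sum hle
      exact ⟨j0, Finset.mem_univ _, by simp [hc, hj0]; linarith⟩
    simpa using this
end

section
/- (Theorem 1.) Let P = {x ∈ ℝ^n : A x = b and x ≥ 0} be a standard-form polyhedron and let x ∈ P. The following are equivalent: (1) x is a vertex of P, i.e., there exists c ∈ ℝ^n such that c·y < c·x for every y ∈ P with y ≠ x; (2) x is an extreme point of P (x ∈ Set.extremePoints ℝ P); (3) x is a basic feasible solution, i.e., the columns {A_j : x_j ≠ 0} of A are linearly independent over ℝ. -/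
/-!
The columns of `A` on the support of `x` are independent exactly when no `d ≠ 0` with `A d = 0`
vanishes wherever `x` does. Such a `d` keeps `x ± t d` in `P` for small `t`, so an extreme point
admits none. Conversely, if there is none, `c = -𝟙{x = 0}` has `c ⬝ᵥ x = 0` and `c ⬝ᵥ y ≤ 0` on `P`,
with equality only if `y` vanishes wherever `x` does; then `y - x` is such a direction, so
`y = x`. Finally, a unique maximizer of a linear functional is an exposed, hence extreme, point.
-/

open Matrix Filter Topology

section ExtremePoints

variable {E : Type*} [AddCommGroup E] [Module ℝ E]

theorem eq_zero_of_mem_extremePoints_of_eventually_add_smul_mem_s3 {S : Set E} {x d : E}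
    (hx : x ∈ S.extremePoints ℝ) (hd : ∀ᶠ t : ℝ in 𝓝 0, x + t • d ∈ S) : d = 0 := by
  have hneg : ∀ᶠ t : ℝ in 𝓝 0, x + (-t) • d ∈ S :=
    (continuous_neg.tendsto' (0 : ℝ) 0 neg_zero).eventually hd
  obtain ⟨t, ht, hplus, hminus⟩ :=
    (eventually_mem_nhdsWithin (a := 0) (s := Set.Ioi 0)).and
      ((hd.and hneg).filter_mono nhdsWithin_le_nhds) |>.exists
  have hseg : x ∈ openSegment ℝ (x + t • d) (x + (-t) • d) :=
    ⟨1 / 2, 1 / 2, by norm_num, by norm_num, by norm_num, by module⟩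
  have htd : t • d = 0 := by
    simpa using (mem_extremePoints.1 hx).2 _ hplus _ hminus hseg |>.1
  exact (smul_eq_zero.1 htd).resolve_left (ne_of_gt ht)

end ExtremePoints

variable {m n : Type*} [Fintype n]

theorem mem_exposedPoints_of_forall_dotProduct_lt {S : Set (n → ℝ)} {x c : n → ℝ} (hx : x ∈ S)
    (hc : ∀ y ∈ S, y ≠ x → c ⬝ᵥ y < c ⬝ᵥ x) : x ∈ S.exposedPoints ℝ := by
  refine ⟨hx, (dotProductBilin ℝ ℝ c).toContinuousLinearMap, fun y hy => ?_⟩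
  simp only [LinearMap.coe_toContinuousLinearMap', dotProductBilin_apply_apply]
  rcases eq_or_ne y x with rfl | hne
  · exact ⟨le_rfl, fun _ => rfl⟩
  · exact ⟨(hc y hy hne).le, fun h => absurd h (hc y hy hne).not_ge⟩

theorem Matrix.linearIndepOn_col_iff {R : Type*} [CommRing R] (A : Matrix m n R) (s : Set n) :
    LinearIndepOn R A.col s ↔ ∀ d : n → R, A *ᵥ d = 0 → (∀ j ∉ s, d j = 0) → d = 0 := by
  rw [linearIndepOn_iff, Finsupp.equivFunOnFinite.forall_congr_left]
  refine forall_congr' fun d => ?_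
  have hd : Finsupp.linearCombination R A.col (Finsupp.equivFunOnFinite.symm d) = A *ᵥ d := by
    ext i
    simp [Finsupp.linearCombination_apply, Finsupp.sum_fintype, mulVec, dotProduct, mul_comm]
  simp only [Finsupp.mem_supported', hd, Finsupp.coe_equivFunOnFinite_symm, ← Finsupp.coe_eq_zero]
  tauto

def standardPolyhedron (A : Matrix m n ℝ) (b : m → ℝ) : Set (n → ℝ) :=
  {x | A *ᵥ x = b ∧ ∀ j, 0 ≤ x j}

variable {A : Matrix m n ℝ} {b : m → ℝ} {x : n → ℝ}

theorem eventually_add_smul_mem_standardPolyhedron (hx : x ∈ standardPolyhedron A b)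
    {d : n → ℝ} (hAd : A *ᵥ d = 0) (hd : ∀ j, x j = 0 → d j = 0) :
    ∀ᶠ t : ℝ in 𝓝 0, x + t • d ∈ standardPolyhedron A b := by
  have hnonneg : ∀ j, ∀ᶠ t : ℝ in 𝓝 0, 0 ≤ x j + t * d j := by
    intro j
    rcases (hx.2 j).eq_or_lt with hxj | hxj
    · simp [← hxj, hd j hxj.symm]
    · refine (Tendsto.eventually_const_lt hxj ?_).mono fun _ => le_of_lt
      exact Continuous.tendsto' (by fun_prop) 0 _ (by simp)
  filter_upwards [eventually_all.2 hnonneg] with t ht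
  exact ⟨by simp [mulVec_add, mulVec_smul, hx.1, hAd], ht⟩

theorem linearIndepOn_col_of_mem_extremePoints
    (hx : x ∈ (standardPolyhedron A b).extremePoints ℝ) :
    LinearIndepOn ℝ A.col {j | x j ≠ 0} := by
  refine A.linearIndepOn_col_iff _ |>.2 fun d hAd hd => ?_
  refine eq_zero_of_mem_extremePoints_of_eventually_add_smul_mem_s3 hx ?_
  exact eventually_add_smul_mem_standardPolyhedron hx.1 hAd fun j hj => hd j (not_not.2 hj)

theorem exists_forall_dotProduct_lt_of_linearIndepOn (hx : x ∈ standardPolyhedron A b)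
    (hind : LinearIndepOn ℝ A.col {j | x j ≠ 0}) :
    ∃ c : n → ℝ, ∀ y ∈ standardPolyhedron A b, y ≠ x → c ⬝ᵥ y < c ⬝ᵥ x := by
  refine ⟨fun j => if x j = 0 then -1 else 0, fun y hy hne => ?_⟩
  have hcx : (fun j => if x j = 0 then -1 else 0) ⬝ᵥ x = 0 :=
    Finset.sum_eq_zero fun j _ => by by_cases h : x j = 0 <;> simp [h]
  have hterm : ∀ j ∈ Finset.univ, (if x j = 0 then -1 else 0) * y j ≤ 0 := fun j _ => by
    by_cases h : x j = 0 <;> simp [h, hy.2 j]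
  rw [hcx]
  refine lt_of_le_of_ne (Finset.sum_nonpos hterm) fun hcy => hne ?_
  have hy0 : ∀ j, x j = 0 → y j = 0 := fun j hj => by
    simpa [hj] using (Finset.sum_eq_zero_iff_of_nonpos hterm).1 hcy j (Finset.mem_univ j)
  refine sub_eq_zero.1 <| (A.linearIndepOn_col_iff _).1 hind (y - x) ?_ fun j hj => ?_
  · rw [mulVec_sub, hy.1, hx.1, sub_self]
  · have hxj : x j = 0 := not_not.1 hj
    simp [hxj, hy0 j hxj]

/-- Theorem 1 of the paper: for a point `x` of the standard-form polyhedron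
`P = {x | A x = b ∧ x ≥ 0}`, the following are equivalent:
(1) `x` is a vertex of `P`;
(2) `x` is an extreme point of `P`;
(3) `x` is a basic feasible solution (the columns of `A` indexed by
`{j | x j ≠ 0}` are linearly independent over `ℝ`). -/
theorem vertex_tfae (m n : ℕ) (A : Matrix (Fin m) (Fin n) ℝ)
    (b : Fin m → ℝ) (P : Set (Fin n → ℝ))
    (hP : P = {x : Fin n → ℝ | A.mulVec x = b ∧ ∀ j, 0 ≤ x j})
    (x : Fin n → ℝ) (hx : x ∈ P) :
    List.TFAE
      [∃ c : Fin n → ℝ, ∀ y ∈ P, y ≠ x →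
          dotProduct c y < dotProduct c x,
        x ∈ Set.extremePoints ℝ P,
        LinearIndependent ℝ (fun j : {j : Fin n // x j ≠ 0} =>
          (fun i : Fin m => A i (j : Fin n)))] := by
  obtain rfl : P = standardPolyhedron A b := hP
  tfae_have 1 → 2 := fun ⟨_, hc⟩ =>
    exposedPoints_subset_extremePoints (mem_exposedPoints_of_forall_dotProduct_lt hx hc)
  tfae_have 2 → 3 := linearIndepOn_col_of_mem_extremePoints
  tfae_have 3 → 1 := exists_forall_dotProduct_lt_of_linearIndepOn hx
  tfae_finish
end

section
/- (Theorem 2.) Let P = {x ∈ ℝ^n : A x = b and x ≥ 0} be a nonempty standard-form polyhedron and let c ∈ ℝ^n be such that the linear objective x ↦ c·x is bounded above on P. Then there exists a point x* ∈ P that is a basic feasible solution of P (the columns {A_j : x*_j ≠ 0} of A are linearly independent) and that maximizes the objective: c·y ≤ c·x* for every y ∈ P. -/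
open Matrix Finset

lemma lp_shrink {m n : ℕ} (A : Matrix (Fin m) (Fin n) ℝ) (b : Fin m → ℝ) (c : Fin n → ℝ)
    (x f : Fin n → ℝ)
    (hAx : A.mulVec x = b) (hx0 : ∀ j, 0 ≤ x j)
    (hAf : A.mulVec f = 0) (hsupp : ∀ j, x j = 0 → f j = 0)
    (hcf : 0 ≤ dotProduct c f) (hneg : ∃ j, f j < 0) :
    ∃ x' : Fin n → ℝ, A.mulVec x' = b ∧ (∀ j, 0 ≤ x' j) ∧
      (Finset.univ.filter (fun j => x' j ≠ 0)) ⊂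
        (Finset.univ.filter (fun j => x j ≠ 0)) ∧
      dotProduct c x ≤ dotProduct c x' := by
  classical
  set S : Finset (Fin n) := Finset.univ.filter (fun j => f j < 0) with hS
  have hSne : S.Nonempty := by
    obtain ⟨j, hj⟩ := hneg
    exact ⟨j, by simp [hS, hj]⟩
  set t : ℝ := S.inf' hSne (fun j => x j / (-f j)) with ht
  have hxpos : ∀ j ∈ S, 0 < x j := by
    intro j hj
    have hfj : f j < 0 := by simpa [hS] using hj
    rcases (hx0 j).lt_or_eq with h | h
    · exact h
    · exact absurd (hsupp j h.symm) (by linarith)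
  have htpos : 0 < t := by
    rw [ht, Finset.lt_inf'_iff]
    intro j hj
    have hfj : f j < 0 := by simpa [hS] using hj
    exact div_pos (hxpos j hj) (by linarith)
  have htle : ∀ j ∈ S, t ≤ x j / (-f j) := fun j hj => Finset.inf'_le _ hj
  obtain ⟨j0, hj0S, hj0⟩ := Finset.exists_mem_eq_inf' hSne (fun j => x j / (-f j))
  have hfj0 : f j0 < 0 := by simpa [hS] using hj0S
  refine ⟨x + t • f, ?_, ?_, ?_, ?_⟩
  · simp [Matrix.mulVec_add, Matrix.mulVec_smul, hAx, hAf]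
  · intro j
    by_cases hfj : f j < 0
    · have h1 : t ≤ x j / (-f j) := htle j (by simp [hS, hfj])
      have h2 : t * (-f j) ≤ x j / (-f j) * (-f j) :=
        mul_le_mul_of_nonneg_right h1 (by linarith)
      rw [div_mul_cancel₀] at h2
      · simp only [Pi.add_apply, Pi.smul_apply, smul_eq_mul]
        nlinarith
      · linarith
    · have : 0 ≤ f j := not_lt.mp hfj
      have := hx0 j
      simp only [Pi.add_apply, Pi.smul_apply, smul_eq_mul]
      nlinarith
  · rw [Finset.ssubset_iff_of_subset]
    · refine ⟨j0, ?_, ?_⟩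
      · simp only [Finset.mem_filter, Finset.mem_univ, true_and]
        intro h
        exact absurd (hsupp j0 h) (by linarith)
      · simp only [Finset.mem_filter, Finset.mem_univ, true_and, not_not,
          Pi.add_apply, Pi.smul_apply, smul_eq_mul]
        have htj : t = x j0 / -f j0 := by rw [ht, hj0]
        rw [htj]
        have hne0 : f j0 ≠ 0 := ne_of_lt hfj0
        rw [div_mul_eq_mul_div, mul_div_assoc, div_neg, div_self hne0]
        ring
    · intro j hj
      simp only [Finset.mem_filter, Finset.mem_univ, true_and] at hj ⊢
      intro hxj
      apply hj
      simp [hsupp j hxj, hxj]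
  · have : dotProduct c (x + t • f)
        = dotProduct c x + t * dotProduct c f := by
      simp [dotProduct_add, dotProduct_smul]
    rw [this]
    nlinarith

lemma lp_unbdd {m n : ℕ} (A : Matrix (Fin m) (Fin n) ℝ) (b : Fin m → ℝ)
    (c : Fin n → ℝ) (P : Set (Fin n → ℝ))
    (hP : P = {x : Fin n → ℝ | A.mulVec x = b ∧ ∀ j, 0 ≤ x j})
    (hbdd : BddAbove ((fun x => dotProduct c x) '' P))
    (x f : Fin n → ℝ) (hx : x ∈ P)
    (hAf : A.mulVec f = 0) (hf0 : ∀ j, 0 ≤ f j)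
    (hcf : 0 < dotProduct c f) : False := by
  obtain ⟨M, hM⟩ := hbdd
  rw [hP] at hx
  obtain ⟨hAx, hx0⟩ := hx
  have hxM : dotProduct c x ≤ M := by
    apply hM
    exact ⟨x, by rw [hP]; exact ⟨hAx, hx0⟩, rfl⟩
  set t : ℝ := (M - dotProduct c x) / dotProduct c f + 1 with htdef
  have ht0 : 0 ≤ t := by
    have : (0:ℝ) ≤ (M - dotProduct c x) / dotProduct c f :=
      div_nonneg (by linarith) hcf.le
    rw [htdef]; linarith
  have hmem : x + t • f ∈ P := by
    rw [hP]
    refine ⟨by simp [Matrix.mulVec_add, Matrix.mulVec_smul, hAx, hAf], fun j => ?_⟩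
    simp only [Pi.add_apply, Pi.smul_apply, smul_eq_mul]
    have := hf0 j; have := hx0 j
    nlinarith
  have hval : dotProduct c (x + t • f)
      = dotProduct c x + t * dotProduct c f := by
    simp [dotProduct_add, dotProduct_smul]
  have hle : dotProduct c (x + t • f) ≤ M := hM ⟨_, hmem, rfl⟩
  rw [hval, htdef] at hle
  have h2 : (M - dotProduct c x) / dotProduct c f
      * dotProduct c f = M - dotProduct c x :=
    div_mul_cancel₀ _ (ne_of_gt hcf)
  nlinarith

lemma lp_direction {m n : ℕ} (A : Matrix (Fin m) (Fin n) ℝ) (x : Fin n → ℝ)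
    (hdep : ¬ LinearIndependent ℝ (fun j : {j : Fin n // x j ≠ 0} =>
        (fun i : Fin m => A i (j : Fin n)))) :
    ∃ d : Fin n → ℝ, A.mulVec d = 0 ∧ d ≠ 0 ∧ ∀ j, x j = 0 → d j = 0 := by
  classical
  rw [Fintype.not_linearIndependent_iff] at hdep
  obtain ⟨g, hsum, j0, hg0⟩ := hdep
  set d : Fin n → ℝ := fun j => if h : x j ≠ 0 then g ⟨j, h⟩ else 0 with hd
  refine ⟨d, ?_, ?_, ?_⟩
  · funext i
    have hi := congrFun hsum i
    simp only [Finset.sum_apply, Pi.smul_apply, smul_eq_mul, Pi.zero_apply] at hi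
    have key : ∑ j, A i j * d j = ∑ j : {j : Fin n // x j ≠ 0}, g j * A i (j : Fin n) := by
      have h1 : ∑ j ∈ Finset.univ.filter (fun j => x j ≠ 0), A i j * d j
          = ∑ j : Fin n, A i j * d j := by
        apply Finset.sum_subset (Finset.subset_univ _)
        intro j _ hj
        simp only [Finset.mem_filter, Finset.mem_univ, true_and, not_not] at hj
        have : d j = 0 := by rw [hd]; simp [hj]
        rw [this, mul_zero]
      rw [← h1, Finset.sum_subtype (Finset.univ.filter (fun j => x j ≠ 0))
          (p := fun j => x j ≠ 0) (by simp) (fun j => A i j * d j)]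
      refine Finset.sum_congr rfl fun j _ => ?_
      rw [hd]; simp only [dif_pos j.2]; ring
    rw [Matrix.mulVec, dotProduct]
    simp only [Pi.zero_apply]
    rw [key, hi]
  · intro h
    apply hg0
    have := congrFun h j0
    rw [hd] at this
    simpa [dif_pos j0.2] using this
  · intro j hj
    rw [hd]
    simp [hj]

lemma lp_step {m n : ℕ} (A : Matrix (Fin m) (Fin n) ℝ) (b : Fin m → ℝ)
    (c : Fin n → ℝ) (P : Set (Fin n → ℝ))
    (hP : P = {x : Fin n → ℝ | A.mulVec x = b ∧ ∀ j, 0 ≤ x j})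
    (hbdd : BddAbove ((fun x => dotProduct c x) '' P))
    (x : Fin n → ℝ) (hx : x ∈ P)
    (hdep : ¬ LinearIndependent ℝ (fun j : {j : Fin n // x j ≠ 0} =>
        (fun i : Fin m => A i (j : Fin n)))) :
    ∃ x' : Fin n → ℝ, x' ∈ P ∧
      (Finset.univ.filter (fun j => x' j ≠ 0)) ⊂
        (Finset.univ.filter (fun j => x j ≠ 0)) ∧
      dotProduct c x ≤ dotProduct c x' := by
  classical
  obtain ⟨d, hAd, hd0, hdsupp⟩ := lp_direction A x hdep
  have hx' := hx
  rw [hP] at hx'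
  obtain ⟨hAx, hx0⟩ := hx'
  have hAnegd : A.mulVec (-d) = 0 := by simp [Matrix.mulVec_neg, hAd]
  have hcnegd : dotProduct c (-d) = - dotProduct c d := by
    simp [dotProduct_neg]
  by_cases h1 : 0 ≤ dotProduct c d ∧ ∃ j, d j < 0
  · obtain ⟨x', hA', h0', hss, hle⟩ :=
      lp_shrink A b c x d hAx hx0 hAd hdsupp h1.1 h1.2
    exact ⟨x', by rw [hP]; exact ⟨hA', h0'⟩, hss, hle⟩
  by_cases h2 : dotProduct c d ≤ 0 ∧ ∃ j, 0 < d j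
  · obtain ⟨j, hj⟩ := h2.2
    obtain ⟨x', hA', h0', hss, hle⟩ :=
      lp_shrink A b c x (-d) hAx hx0 hAnegd
        (fun j hj => by simp [hdsupp j hj])
        (by rw [hcnegd]; linarith [h2.1]) ⟨j, by simpa using hj⟩
    exact ⟨x', by rw [hP]; exact ⟨hA', h0'⟩, hss, hle⟩
  · exfalso
    push_neg at h1 h2
    rcases lt_trichotomy (dotProduct c d) 0 with hlt | heq | hgt
    · exact lp_unbdd A b c P hP hbdd x (-d) hx hAnegd
        (fun j => by simpa using h2 hlt.le j) (by rw [hcnegd]; linarith)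
    · apply hd0
      funext j
      exact le_antisymm (h2 heq.le j) (h1 heq.ge j)
    · exact lp_unbdd A b c P hP hbdd x d hx hAd (h1 hgt.le) hgt

lemma lp_exists_bfs {m n : ℕ} (A : Matrix (Fin m) (Fin n) ℝ) (b : Fin m → ℝ)
    (c : Fin n → ℝ) (P : Set (Fin n → ℝ))
    (hP : P = {x : Fin n → ℝ | A.mulVec x = b ∧ ∀ j, 0 ≤ x j})
    (hbdd : BddAbove ((fun x => dotProduct c x) '' P)) :
    ∀ x ∈ P, ∃ x' : Fin n → ℝ, x' ∈ P ∧
      LinearIndependent ℝ (fun j : {j : Fin n // x' j ≠ 0} =>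
        (fun i : Fin m => A i (j : Fin n))) ∧
      dotProduct c x ≤ dotProduct c x' := by
  classical
  suffices h : ∀ k : ℕ, ∀ x : Fin n → ℝ,
      (Finset.univ.filter (fun j => x j ≠ 0)).card ≤ k → x ∈ P →
      ∃ x' : Fin n → ℝ, x' ∈ P ∧
        LinearIndependent ℝ (fun j : {j : Fin n // x' j ≠ 0} =>
          (fun i : Fin m => A i (j : Fin n))) ∧
        dotProduct c x ≤ dotProduct c x' by
    intro x hx
    exact h _ x le_rfl hx
  intro k
  induction k with
  | zero =>
    intro x hcard hx
    have hemp : (Finset.univ.filter (fun j => x j ≠ 0)) = ∅ :=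
      Finset.card_eq_zero.mp (Nat.le_zero.mp hcard)
    have : IsEmpty {j : Fin n // x j ≠ 0} := by
      refine ⟨fun j => ?_⟩
      have : (j : Fin n) ∈ (Finset.univ.filter (fun j => x j ≠ 0)) := by
        simp [j.2]
      rw [hemp] at this
      exact absurd this (Finset.notMem_empty _)
    exact ⟨x, hx, linearIndependent_empty_type, le_rfl⟩
  | succ k ih =>
    intro x hcard hx
    by_cases hli : LinearIndependent ℝ (fun j : {j : Fin n // x j ≠ 0} =>
        (fun i : Fin m => A i (j : Fin n)))
    · exact ⟨x, hx, hli, le_rfl⟩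
    · obtain ⟨x', hx', hss, hle⟩ := lp_step A b c P hP hbdd x hx hli
      have hlt := Finset.card_lt_card hss
      obtain ⟨x'', h1, h2, h3⟩ := ih x' (by omega) hx'
      exact ⟨x'', h1, h2, le_trans hle h3⟩

lemma lp_bfs_inj {m n : ℕ} (A : Matrix (Fin m) (Fin n) ℝ) (b : Fin m → ℝ)
    (x y : Fin n → ℝ) (hAx : A.mulVec x = b) (hAy : A.mulVec y = b)
    (hli : LinearIndependent ℝ (fun j : {j : Fin n // x j ≠ 0} =>
        (fun i : Fin m => A i (j : Fin n))))
    (hsupp : (Finset.univ.filter (fun j => x j ≠ 0))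
      = (Finset.univ.filter (fun j => y j ≠ 0))) : x = y := by
  classical
  have hzero : ∀ j : Fin n, x j = 0 → y j = 0 := by
    intro j hj
    by_contra hyj
    have : j ∈ Finset.univ.filter (fun j => y j ≠ 0) := by simp [hyj]
    rw [← hsupp] at this
    simp only [Finset.mem_filter, Finset.mem_univ, true_and] at this
    exact this hj
  have key : ∀ g : {j : Fin n // x j ≠ 0} → ℝ,
      (∀ j : {j : Fin n // x j ≠ 0}, g j = x (j : Fin n) - y (j : Fin n)) →
      ∑ j : {j : Fin n // x j ≠ 0}, g j • (fun i : Fin m => A i (j : Fin n)) = 0 := by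
    intro g hg
    funext i
    simp only [Finset.sum_apply, Pi.smul_apply, smul_eq_mul, Pi.zero_apply]
    have h1 : ∑ j ∈ Finset.univ.filter (fun j => x j ≠ 0),
        A i j * (x j - y j) = ∑ j : Fin n, A i j * (x j - y j) := by
      apply Finset.sum_subset (Finset.subset_univ _)
      intro j _ hj
      simp only [Finset.mem_filter, Finset.mem_univ, true_and, not_not] at hj
      rw [hj, hzero j hj, sub_zero, mul_zero]
    have h2 : ∑ j : Fin n, A i j * (x j - y j) = 0 := by
      have hx' := congrFun hAx i
      have hy' := congrFun hAy i
      rw [Matrix.mulVec, dotProduct] at hx' hy'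
      simp only [mul_sub, Finset.sum_sub_distrib]
      rw [hx', hy', sub_self]
    rw [Finset.sum_subtype (Finset.univ.filter (fun j => x j ≠ 0))
        (p := fun j => x j ≠ 0) (by simp) (fun j => A i j * (x j - y j))] at h1
    calc ∑ j : {j : Fin n // x j ≠ 0}, g j * A i (j : Fin n)
        = ∑ j : {j : Fin n // x j ≠ 0}, A i (j : Fin n) * (x j - y j) := by
          refine Finset.sum_congr rfl fun j _ => ?_
          rw [hg j]; ring
      _ = 0 := by rw [h1, h2]
  have hg0 := (Fintype.linearIndependent_iff.mp hli)
    (fun j => x (j : Fin n) - y (j : Fin n)) ?_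
  · funext j
    by_cases hj : x j ≠ 0
    · have := hg0 ⟨j, hj⟩
      simp only at this
      linarith [sub_eq_zero.mp this]
    · push_neg at hj
      rw [hj, hzero j hj]
  · exact key _ (fun j => rfl)

/-- Theorem 2 of the paper: any bounded LP in standard form has an optimum at
a basic feasible solution. If the standard-form polyhedron
`P = {x | A x = b ∧ x ≥ 0}` is nonempty and the linear objective `x ↦ c ⬝ x`
is bounded above on `P`, then there is a maximizer `x*` of the objective
over `P` which is a basic feasible solution. -/
theorem boundedLP_optimum_at_basicFeasible (m n : ℕ)
    (A : Matrix (Fin m) (Fin n) ℝ) (b : Fin m → ℝ) (P : Set (Fin n → ℝ))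
    (hP : P = {x : Fin n → ℝ | A.mulVec x = b ∧ ∀ j, 0 ≤ x j})
    (hne : P.Nonempty) (c : Fin n → ℝ)
    (hbdd : BddAbove ((fun x => dotProduct c x) '' P)) :
    ∃ x : Fin n → ℝ, x ∈ P ∧
      LinearIndependent ℝ (fun j : {j : Fin n // x j ≠ 0} =>
        (fun i : Fin m => A i (j : Fin n))) ∧
      ∀ y ∈ P, dotProduct c y ≤ dotProduct c x := by
  classical
  set B : Set (Fin n → ℝ) := {x | x ∈ P ∧
    LinearIndependent ℝ (fun j : {j : Fin n // x j ≠ 0} =>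
      (fun i : Fin m => A i (j : Fin n)))} with hB
  have hBfin : B.Finite := by
    apply Set.Finite.of_finite_image (f := fun x : Fin n → ℝ =>
      Finset.univ.filter (fun j => x j ≠ 0))
    · exact Set.toFinite _
    · intro x hx y hy hxy
      have hx' : A.mulVec x = b := by
        have := hx.1; rw [hP] at this; exact this.1
      have hy' : A.mulVec y = b := by
        have := hy.1; rw [hP] at this; exact this.1
      exact lp_bfs_inj A b x y hx' hy' hx.2 hxy
  have hBne : B.Nonempty := by
    obtain ⟨x, hx⟩ := hne
    obtain ⟨x', h1, h2, _⟩ := lp_exists_bfs A b c P hP hbdd x hx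
    exact ⟨x', h1, h2⟩
  obtain ⟨x, hxB, hxmax⟩ := Set.exists_max_image B
    (fun x => dotProduct c x) hBfin hBne
  refine ⟨x, hxB.1, hxB.2, fun y hy => ?_⟩
  obtain ⟨y', h1, h2, h3⟩ := lp_exists_bfs A b c P hP hbdd y hy
  exact le_trans h3 (hxmax y' ⟨h1, h2⟩)
end

section
/- Every nonempty standard-form polyhedron P = {x ∈ ℝ^n : A x = b and x ≥ 0} has at least one extreme point: there exists x ∈ Set.extremePoints ℝ P. -/
/-!
Minimise the coordinate sum `∑ j, x j` over `P`. Since `P` lies in the nonnegative orthant, its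
sublevel sets in `P` are compact, so the minimum is attained and the set of minimisers is a
nonempty compact exposed face of `P`. By the Krein–Milman lemma this face has an extreme point,
and extreme points of a face of `P` are extreme points of `P`.
-/

open Set

section LocallyConvex

variable {E : Type*} [AddCommGroup E] [Module ℝ E] [TopologicalSpace E] [T2Space E]
  [IsTopologicalAddGroup E] [ContinuousSMul ℝ E] [LocallyConvexSpace ℝ E]

theorem extremePoints_nonempty_of_isCompact_sublevel {s : Set E} (l : StrongDual ℝ E) {x₀ : E}
    (hx₀ : x₀ ∈ s) (hK : IsCompact (s ∩ {x | l x ≤ l x₀})) : (s.extremePoints ℝ).Nonempty := by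
  obtain ⟨xₘ, hxₘ, hmin⟩ := hK.exists_isMinOn ⟨x₀, hx₀, le_refl (l x₀)⟩ l.continuous.continuousOn
  have hmin_s : ∀ y ∈ s, l xₘ ≤ l y := fun y hy =>
    (le_total (l y) (l x₀)).elim (fun h => hmin ⟨hy, h⟩)
      (fun h => (hmin ⟨hx₀, le_refl (l x₀)⟩).trans h)
  -- `toExposed` collects maximisers, so the minimisers of `l` on `s` are the face exposed by `-l`.
  set F := (-l).toExposed s
  have hF : IsExposed ℝ s F := ContinuousLinearMap.toExposed.isExposed
  have hFK : F ⊆ s ∩ {x | l x ≤ l x₀} := fun x hx =>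
    ⟨hx.1, by simpa using hx.2 x₀ hx₀⟩
  have hFne : F.Nonempty := ⟨xₘ, hxₘ.1, fun y hy => by simpa using hmin_s y hy⟩
  obtain ⟨y, hy⟩ := ((hF.mono inter_subset_left hFK).isCompact hK).extremePoints_nonempty hFne
  exact ⟨y, hF.isExtreme.extremePoints_subset_extremePoints hy⟩

end LocallyConvex

section NonnegOrthant

variable {ι : Type*} [Fintype ι]

theorem IsClosed.isCompact_inter_sum_le {s : Set (ι → ℝ)} (hs : IsClosed s)
    (hs_nonneg : ∀ x ∈ s, ∀ i, 0 ≤ x i) (c : ℝ) : IsCompact (s ∩ {x | ∑ i, x i ≤ c}) := by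
  refine (isCompact_Icc (a := 0) (b := fun _ => c)).of_isClosed_subset
    (hs.inter (_root_.isClosed_le (by fun_prop) continuous_const)) ?_
  rintro x ⟨hx, hsum⟩
  exact ⟨hs_nonneg x hx, fun i =>
    (Finset.single_le_sum (fun j _ => hs_nonneg x hx j) (Finset.mem_univ i)).trans hsum⟩

theorem isClosed_standardForm {κ : Type*} (A : Matrix κ ι ℝ) (b : κ → ℝ) :
    IsClosed {x : ι → ℝ | A.mulVec x = b ∧ ∀ j, 0 ≤ x j} := by
  simp only [ofPred_and, ofPred_forall]
  exact (isClosed_eq (continuous_const.matrix_mulVec continuous_id) continuous_const).inter <|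
    isClosed_iInter fun j => isClosed_le continuous_const (continuous_apply j)

end NonnegOrthant

/-- Every nonempty standard-form polyhedron `P = {x | A x = b ∧ x ≥ 0}`
has at least one extreme point. -/
theorem standardForm_polyhedron_has_extremePoint (m n : ℕ)
    (A : Matrix (Fin m) (Fin n) ℝ) (b : Fin m → ℝ) (P : Set (Fin n → ℝ))
    (hP : P = {x : Fin n → ℝ | A.mulVec x = b ∧ ∀ j, 0 ≤ x j})
    (hne : P.Nonempty) :
    ∃ x : Fin n → ℝ, x ∈ Set.extremePoints ℝ P := by
  obtain ⟨x₀, hx₀⟩ := hne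
  let l : StrongDual ℝ (Fin n → ℝ) := ∑ j, ContinuousLinearMap.proj j
  have hl : ∀ x, l x = ∑ j, x j := fun x => by simp [l]
  have hK : IsCompact (P ∩ {x | l x ≤ l x₀}) := by
    simp only [hl]
    subst hP
    exact (isClosed_standardForm A b).isCompact_inter_sum_le (fun x hx => hx.2) _
  exact extremePoints_nonempty_of_isCompact_sublevel l hx₀ hK
end

section
/- Let P = {x ∈ ℝ^n : A x = b and x ≥ 0} be a nonempty standard-form polyhedron and let c ∈ ℝ^n be such that the linear objective x ↦ c·x is bounded above on P. Then the supremum of the objective over P is attained: there exists x* ∈ P with c·y ≤ c·x* for every y ∈ P. -/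
variable {E : Type*} [AddCommGroup E] [Module ℝ E]

lemma cone_caratheodory (k : ℕ) (v : Fin k → E) :
    ∀ N (t : Fin k → ℝ), (Finset.univ.filter fun i => t i ≠ 0).card ≤ N →
      (∀ i, 0 ≤ t i) →
      ∃ s : Finset (Fin k), (LinearIndependent ℝ fun i : s => v (i : Fin k)) ∧
        ∃ u : Fin k → ℝ, (∀ i, 0 ≤ u i) ∧ (∀ i, u i ≠ 0 → i ∈ s) ∧
          ∑ i, u i • v i = ∑ i, t i • v i := by
  intro N
  induction N with
  | zero =>
      intro t hcard _
      refine ⟨∅, linearIndependent_empty_type, 0, fun i => le_rfl, by simp, ?_⟩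
      have ht : ∀ i, t i = 0 := by
        intro i
        by_contra h
        have hmem : i ∈ Finset.univ.filter fun i => t i ≠ 0 := by simp [h]
        have := Finset.card_pos.mpr ⟨i, hmem⟩
        omega
      simp [ht]
  | succ N ih =>
      intro t hcard ht
      set s : Finset (Fin k) := Finset.univ.filter fun i => t i ≠ 0 with hs
      by_cases hind : LinearIndependent ℝ fun i : s => v (i : Fin k)
      · exact ⟨s, hind, t, ht, fun i hi => by simp [hs, hi], rfl⟩
      · obtain ⟨g, hg0, j, hgj⟩ := Fintype.not_linearIndependent_iff.mp hind
        set c0 : Fin k → ℝ := fun i => if h : i ∈ s then g ⟨i, h⟩ else 0 with hc0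
        have hc0sum : ∑ i, c0 i • v i = 0 := by
          rw [← Finset.sum_subset (Finset.subset_univ s)]
          · rw [← hg0, ← Finset.sum_attach s (fun i => c0 i • v i)]
            refine Finset.sum_congr rfl fun i _ => ?_
            simp [hc0, i.2]
          · intro i _ hi
            simp [hc0, hi]
        have hc0j : c0 (j : Fin k) ≠ 0 := by simpa [hc0, j.2] using hgj
        have key : ∀ c : Fin k → ℝ, (∑ i, c i • v i = 0) → (∀ i, c i ≠ 0 → i ∈ s) →
            (∃ i, 0 < c i) →
            ∃ s' : Finset (Fin k), (LinearIndependent ℝ fun i : s' => v (i : Fin k)) ∧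
              ∃ u : Fin k → ℝ, (∀ i, 0 ≤ u i) ∧ (∀ i, u i ≠ 0 → i ∈ s') ∧
                ∑ i, u i • v i = ∑ i, t i • v i := by
          rintro c hcsum hcsupp ⟨i₁, hi₁⟩
          set T : Finset (Fin k) := Finset.univ.filter fun i => 0 < c i with hT
          have hTne : T.Nonempty := ⟨i₁, by simp [hT, hi₁]⟩
          set lam : ℝ := T.inf' hTne (fun i => t i / c i) with hlam
          obtain ⟨i₀, hi₀T, hi₀⟩ := Finset.exists_mem_eq_inf' hTne (fun i => t i / c i)
          have hci₀ : 0 < c i₀ := by simpa [hT] using hi₀T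
          have hi₀s : i₀ ∈ s := hcsupp i₀ hci₀.ne'
          have hlam_nonneg : 0 ≤ lam := by
            rw [hlam, hi₀]; exact div_nonneg (ht i₀) hci₀.le
          set u : Fin k → ℝ := fun i => t i - lam * c i with hu
          have hu_nonneg : ∀ i, 0 ≤ u i := by
            intro i
            by_cases h : 0 < c i
            · have hle : lam ≤ t i / c i := Finset.inf'_le _ (by simp [hT, h])
              have h2 : lam * c i ≤ t i := (le_div_iff₀ h).mp hle
              simp only [hu]; linarith
            · push_neg at h
              have h2 : lam * c i ≤ 0 := mul_nonpos_of_nonneg_of_nonpos hlam_nonneg h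
              simp only [hu]; linarith [ht i]
          have hu_i₀ : u i₀ = 0 := by
            simp only [hu]
            rw [hlam.trans hi₀, div_mul_cancel₀ _ hci₀.ne', sub_self]
          have husupp : ∀ i, u i ≠ 0 → i ∈ s.erase i₀ := by
            intro i hui
            refine Finset.mem_erase.mpr ⟨?_, ?_⟩
            · rintro rfl; exact hui hu_i₀
            · by_contra hin
              have hti : t i = 0 := by
                by_contra h; exact hin (by simp [hs, h])
              have hci : c i = 0 := by
                by_contra h; exact hin (hcsupp i h)
              exact hui (by simp [hu, hti, hci])
          have hcard' : (Finset.univ.filter fun i => u i ≠ 0).card ≤ N := by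
            have hsub : (Finset.univ.filter fun i => u i ≠ 0) ⊆ s.erase i₀ := by
              intro i hi
              exact husupp i (by simpa using hi)
            have h1 : (s.erase i₀).card < s.card := Finset.card_erase_lt_of_mem hi₀s
            have h2 := Finset.card_le_card hsub
            omega
          obtain ⟨s', hs', u', hu'1, hu'2, hu'3⟩ := ih u hcard' hu_nonneg
          refine ⟨s', hs', u', hu'1, hu'2, ?_⟩
          rw [hu'3]
          have heq : ∑ i, u i • v i = ∑ i, t i • v i - lam • ∑ i, c i • v i := by
            rw [Finset.smul_sum, ← Finset.sum_sub_distrib]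
            refine Finset.sum_congr rfl fun i _ => ?_
            simp [hu, sub_smul, smul_smul]
          rw [heq, hcsum, smul_zero, sub_zero]
        by_cases hpos : ∃ i, 0 < c0 i
        · exact key c0 hc0sum (fun i hi => by by_contra h; exact hi (by simp [hc0, h])) hpos
        · push_neg at hpos
          refine key (fun i => -c0 i) ?_ ?_ ?_
          · simp only [neg_smul, Finset.sum_neg_distrib, hc0sum, neg_zero]
          · intro i hi
            by_contra h
            exact hi (by simp [hc0, h])
          · refine ⟨j, ?_⟩
            rcases (hpos j).lt_or_eq with h | h
            · simpa using h
            · exact absurd h hc0j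

lemma isClosed_coneSet {F : Type*} [NormedAddCommGroup F] [NormedSpace ℝ F]
    [FiniteDimensional ℝ F] (k : ℕ) (v : Fin k → F) :
    IsClosed {x : F | ∃ t : Fin k → ℝ, (∀ i, 0 ≤ t i) ∧ ∑ i, t i • v i = x} := by
  have hdecomp : {x : F | ∃ t : Fin k → ℝ, (∀ i, 0 ≤ t i) ∧ ∑ i, t i • v i = x} =
      ⋃ s ∈ {s : Finset (Fin k) | LinearIndependent ℝ fun i : s => v (i : Fin k)},
        (fun t : s → ℝ => ∑ i : s, t i • v (i : Fin k)) '' {t | ∀ i, 0 ≤ t i} := by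
    ext x
    simp only [Set.mem_setOf_eq, Set.mem_iUnion, Set.mem_image]
    constructor
    · rintro ⟨t, ht, rfl⟩
      obtain ⟨s, hsind, u, hu0, husupp, husum⟩ :=
        cone_caratheodory k v (Finset.univ.filter fun i => t i ≠ 0).card t le_rfl ht
      refine ⟨s, hsind, fun i => u i, fun i => hu0 i, ?_⟩
      rw [← husum]
      exact (Finset.sum_attach s fun i => u i • v i).trans
        (Finset.sum_subset (Finset.subset_univ s)
          (fun i _ hi => by simp [of_not_not ((not_imp_not.mpr (husupp i)) hi)]))
    · rintro ⟨s, hsind, t, ht, rfl⟩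
      refine ⟨fun i => if h : i ∈ s then t ⟨i, h⟩ else 0, ?_, ?_⟩
      · intro i
        by_cases h : i ∈ s
        · simp [h, ht ⟨i, h⟩]
        · simp [h]
      · rw [← Finset.sum_subset (Finset.subset_univ s) (fun i _ hi => by simp [hi])]
        rw [← Finset.sum_attach s
          (fun i => (if h : i ∈ s then t ⟨i, h⟩ else 0) • v i)]
        exact Finset.sum_congr rfl fun i _ => by simp [i.2]
  rw [hdecomp]
  refine Set.Finite.isClosed_biUnion (Set.toFinite _) ?_
  rintro s hs
  let f : (s → ℝ) →ₗ[ℝ] F :=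
    { toFun := fun t => ∑ i : s, t i • v (i : Fin k)
      map_add' := fun a b => by simp [add_smul, Finset.sum_add_distrib]
      map_smul' := fun r a => by simp [smul_smul, Finset.smul_sum] }
  have hker : LinearMap.ker f = ⊥ := by
    rw [LinearMap.ker_eq_bot']
    intro t ht
    funext i
    exact Fintype.linearIndependent_iff.mp hs t ht i
  have hemb := LinearMap.isClosedEmbedding_of_injective (𝕜 := ℝ) hker
  have horth : IsClosed {t : s → ℝ | ∀ i, 0 ≤ t i} := by
    have : {t : s → ℝ | ∀ i, 0 ≤ t i} = ⋂ i, {t : s → ℝ | 0 ≤ t i} := by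
      ext; simp
    rw [this]
    exact isClosed_iInter fun i => isClosed_le continuous_const (continuous_apply i)
  exact hemb.isClosedMap _ horth

/-- If the standard-form polyhedron `P = {x | A x = b ∧ x ≥ 0}` is nonempty
and the linear objective `x ↦ c ⬝ x` is bounded above on `P`, then the
supremum of the objective over `P` is attained. -/
theorem boundedLP_attains_max (m n : ℕ)
    (A : Matrix (Fin m) (Fin n) ℝ) (b : Fin m → ℝ) (P : Set (Fin n → ℝ))
    (hP : P = {x : Fin n → ℝ | A.mulVec x = b ∧ ∀ j, 0 ≤ x j})
    (hne : P.Nonempty) (c : Fin n → ℝ)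
    (hbdd : BddAbove ((fun x => dotProduct c x) '' P)) :
    ∃ x ∈ P, ∀ y ∈ P, dotProduct c y ≤ dotProduct c x := by
  set v : Fin n → ((Fin m → ℝ) × ℝ) := fun j => (fun i => A i j, c j) with hv
  have hsum : ∀ x : Fin n → ℝ, ∑ j, x j • v j = (A.mulVec x, dotProduct c x) := by
    intro x
    refine Prod.ext ?_ ?_
    · rw [Prod.fst_sum]
      funext i
      simp only [hv, Prod.smul_mk, Finset.sum_apply, Pi.smul_apply, smul_eq_mul]
      simp [Matrix.mulVec, dotProduct, mul_comm]
    · rw [Prod.snd_sum]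
      simp [hv, dotProduct, mul_comm]
  have himg : (fun x => dotProduct c x) '' P =
      {r : ℝ | (b, r) ∈ {z : (Fin m → ℝ) × ℝ |
        ∃ t : Fin n → ℝ, (∀ i, 0 ≤ t i) ∧ ∑ i, t i • v i = z}} := by
    ext r
    simp only [Set.mem_image, Set.mem_setOf_eq, hP]
    constructor
    · rintro ⟨x, ⟨hAx, hx0⟩, rfl⟩
      exact ⟨x, hx0, by rw [hsum x, hAx]⟩
    · rintro ⟨t, ht0, hts⟩
      rw [hsum t, Prod.mk.injEq] at hts
      exact ⟨t, ⟨hts.1, ht0⟩, hts.2⟩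
  have hclosed : IsClosed ((fun x => dotProduct c x) '' P) := by
    rw [himg]
    exact (isClosed_coneSet n v).preimage (Continuous.prodMk continuous_const continuous_id)
  have hne' : ((fun x => dotProduct c x) '' P).Nonempty := hne.image _
  have hmem := hclosed.csSup_mem hne' hbdd
  obtain ⟨x, hxP, hxs⟩ := hmem
  exact ⟨x, hxP, fun y hyP =>
    le_of_le_of_eq (le_csSup hbdd ⟨y, hyP, rfl⟩) hxs.symm⟩
end

section
/- (Bauer maximum principle.) Let E be a finite-dimensional real normed vector space, K ⊆ E a nonempty compact convex set, and f : E → ℝ a function that is continuous on K and convex on K (ConvexOn ℝ K f). Then f attains its maximum over K at an extreme point of K: there exists x ∈ Set.extremePoints ℝ K with f(y) ≤ f(x) for all y ∈ K. -/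
/-!
The maximizers of a convex function on `K` form an extreme subset (a face) of `K`: a maximizer
inside an open segment forces both endpoints to be maximizers. For `f` continuous and `K`
compact this face is nonempty and compact, so by the Krein–Milman lemma it has an extreme point,
and extreme points of a face of `K` are extreme points of `K`.
-/

open Set

theorem ConvexOn.isExtreme_setOf_isMaxOn {𝕜 E β : Type*} [Field 𝕜] [LinearOrder 𝕜]
    [IsStrictOrderedRing 𝕜] [AddCommGroup E] [Module 𝕜 E] [AddCommMonoid β] [LinearOrder β]
    [IsOrderedCancelAddMonoid β] [Module 𝕜 β] [PosSMulStrictMono 𝕜 β] {s : Set E} {f : E → β}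
    (hf : ConvexOn 𝕜 s f) : IsExtreme 𝕜 s {x ∈ s | IsMaxOn f s x} where
  subset _ hx := hx.1
  left_mem_of_mem_openSegment _ hx _ hy _ hz hxyz :=
    ⟨hx, fun _ hw => (hz.2 hw).trans (hf.le_left_of_right_le hx hy hxyz (hz.2 hy))⟩

theorem IsCompact.exists_mem_extremePoints_isMaxOn {E : Type*} [AddCommGroup E] [Module ℝ E]
    [TopologicalSpace E] [T2Space E] [IsTopologicalAddGroup E] [ContinuousSMul ℝ E]
    [LocallyConvexSpace ℝ E] {K : Set E} (hK : IsCompact K) (hne : K.Nonempty) {f : E → ℝ}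
    (hcont : ContinuousOn f K) (hconv : ConvexOn ℝ K f) :
    ∃ x ∈ K.extremePoints ℝ, IsMaxOn f K x := by
  obtain ⟨x₀, hx₀K, hx₀⟩ := hK.exists_isMaxOn hne hcont
  have hmax : {x ∈ K | IsMaxOn f K x} = K ∩ f ⁻¹' Ici (f x₀) := by
    ext x
    exact ⟨fun hx => ⟨hx.1, hx.2 hx₀K⟩,
      fun hx => ⟨hx.1, fun y hy => show f y ≤ f x from (hx₀ hy).trans hx.2⟩⟩
  have hmax_compact : IsCompact {x ∈ K | IsMaxOn f K x} := by
    rw [hmax]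
    exact hK.of_isClosed_subset (hcont.preimage_isClosed_of_isClosed hK.isClosed isClosed_Ici)
      inter_subset_left
  obtain ⟨x, hx⟩ := hmax_compact.extremePoints_nonempty ⟨x₀, hx₀K, hx₀⟩
  exact ⟨x, hconv.isExtreme_setOf_isMaxOn.extremePoints_subset_extremePoints hx,
    (extremePoints_subset hx).2⟩

theorem bauer_maximum_principle_general (E : Type*) [NormedAddCommGroup E]
    [NormedSpace ℝ E]
    (K : Set E) (hne : K.Nonempty) (hcomp : IsCompact K)
    (f : E → ℝ) (hcont : ContinuousOn f K) (hconvf : ConvexOn ℝ K f) :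
    ∃ x ∈ Set.extremePoints ℝ K, ∀ y ∈ K, f y ≤ f x :=
  hcomp.exists_mem_extremePoints_isMaxOn hne hcont hconvf

/-- Bauer maximum principle: a function continuous and convex on a nonempty
compact convex subset `K` of a finite-dimensional real normed space attains
its maximum over `K` at an extreme point of `K`. -/
theorem bauer_maximum_principle (E : Type*) [NormedAddCommGroup E]
    [NormedSpace ℝ E] [FiniteDimensional ℝ E]
    (K : Set E) (hne : K.Nonempty) (hcomp : IsCompact K) (hconv : Convex ℝ K)
    (f : E → ℝ) (hcont : ContinuousOn f K) (hconvf : ConvexOn ℝ K f) :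
    ∃ x ∈ Set.extremePoints ℝ K, ∀ y ∈ K, f y ≤ f x :=
  bauer_maximum_principle_general E K hne hcomp f hcont hconvf
end
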